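/- arXiv:1105.0859 — 2 statements merged into one kernel-verified Lean document; each statement's English description precedes it below -/
import Mathlib

section
/- For all x > 0, sinh(x)/x < cosh³(x/3) < (cosh x + 2)/3. -/
open Real

/-!
With `c = cosh (x/3)` and `s = sinh (x/3)`, the triplication formula `cosh x = 4c³ - 3c` turns
the upper bound into `(c - 1)² (c + 2) > 0`. For the lower bound, `x c³ - sinh x` vanishes at `0`
and has derivative `3cs (x c / 3 - s)`, which is positive because `tanh t < t` for `t > 0`.
-/

lemma pos_of_hasDerivAt_of_deriv_pos {f f' : ℝ → ℝ} (hf₀ : f 0 = 0)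
    (hf : ∀ y, HasDerivAt f (f' y) y) (hf' : ∀ y, 0 < y → 0 < f' y) {x : ℝ} (hx : 0 < x) :
    0 < f x := by
  have hmono : StrictMonoOn f (Set.Ici 0) :=
    strictMonoOn_of_hasDerivWithinAt_pos (convex_Ici 0)
      (fun y _ => (hf y).continuousAt.continuousWithinAt)
      (fun y _ => (hf y).hasDerivWithinAt)
      (fun y hy => hf' y (by simpa using hy))
  simpa [hf₀] using hmono Set.self_mem_Ici hx.le hx

lemma sinh_lt_mul_cosh {t : ℝ} (ht : 0 < t) : sinh t < t * cosh t := by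
  have hderiv (y : ℝ) : HasDerivAt (fun t => t * cosh t - sinh t) (y * sinh y) y := by
    refine (((hasDerivAt_id' y).mul (hasDerivAt_cosh y)).sub (hasDerivAt_sinh y)).congr_deriv ?_
    ring
  exact sub_pos.mp <| pos_of_hasDerivAt_of_deriv_pos (by simp) hderiv
    (fun y hy => mul_pos hy (sinh_pos_iff.mpr hy)) ht

lemma cosh_eq_four_mul_cosh_div_three_pow_three_sub (x : ℝ) :
    cosh x = 4 * cosh (x / 3) ^ 3 - 3 * cosh (x / 3) := by
  rw [← cosh_three_mul, mul_div_cancel₀ x three_ne_zero]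

lemma hasDerivAt_mul_cosh_div_three_pow_three_sub_sinh (y : ℝ) :
    HasDerivAt (fun x => x * cosh (x / 3) ^ 3 - sinh x)
      (3 * cosh (y / 3) * sinh (y / 3) * (y / 3 * cosh (y / 3) - sinh (y / 3))) y := by
  have hcosh : HasDerivAt (fun x => cosh (x / 3)) (sinh (y / 3) * (1 / 3)) y :=
    ((hasDerivAt_id' y).div_const 3).cosh
  refine (((hasDerivAt_id' y).mul (hcosh.fun_pow 3)).sub (hasDerivAt_sinh y)).congr_deriv ?_
  have hsq : sinh (y / 3) ^ 2 = cosh (y / 3) ^ 2 - 1 := by rw [sinh_sq]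
  rw [cosh_eq_four_mul_cosh_div_three_pow_three_sub y]
  linear_combination 3 * cosh (y / 3) * hsq

lemma sinh_lt_mul_cosh_div_three_pow_three {x : ℝ} (hx : 0 < x) :
    sinh x < x * cosh (x / 3) ^ 3 := by
  refine sub_pos.mp <| pos_of_hasDerivAt_of_deriv_pos (by simp)
    hasDerivAt_mul_cosh_div_three_pow_three_sub_sinh (fun y hy => ?_) hx
  have hy3 : 0 < y / 3 := by positivity
  have htanh : 0 < y / 3 * cosh (y / 3) - sinh (y / 3) := sub_pos.mpr (sinh_lt_mul_cosh hy3)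
  have hsinh : 0 < sinh (y / 3) := sinh_pos_iff.mpr hy3
  have := cosh_pos (y / 3)
  positivity

lemma cosh_div_three_pow_three_lt {x : ℝ} (hx : x ≠ 0) :
    cosh (x / 3) ^ 3 < (cosh x + 2) / 3 := by
  have hc : 1 < cosh (x / 3) := one_lt_cosh.mpr (div_ne_zero hx three_ne_zero)
  have hfactor : 0 < (cosh (x / 3) - 1) ^ 2 * (cosh (x / 3) + 2) := by
    have := sub_pos.mpr hc
    positivity
  rw [cosh_eq_four_mul_cosh_div_three_pow_three_sub x]
  linarith

theorem stmt11 (x : ℝ) (hx : 0 < x) :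
    Real.sinh x/x < (Real.cosh (x/3))^3 ∧ (Real.cosh (x/3))^3 < (Real.cosh x + 2)/3 := by
  refine ⟨?_, cosh_div_three_pow_three_lt hx.ne'⟩
  rw [div_lt_iff₀ hx, mul_comm]
  exact sinh_lt_mul_cosh_div_three_pow_three hx
end

section
/- For all x in (0, π/2), cot x + coth x < 2/x, tan x · tanh x > x², and tan x + tanh x > 2x. -/
/-! With `H = sin·cosh − cos·sinh`, `G = sin·cosh + cos·sinh − 2t·cos·cosh` and
`F = 2 sin·sinh − t (sin·cosh + cos·sinh)`, all vanishing at `0`, one has `H' = 2 sin·sinh`,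
`G' = 2t·H` and `F' = G`; so `H`, `G`, `F` are successively positive on `(0, π)`, and `F > 0` is
`cot x + coth x < 2/x` cleared of denominators. By AM–GM, `cot x · coth x < 1/x²`, which inverts to
`tan x · tanh x > x²`, and AM–GM once more gives `tan x + tanh x > 2x`. -/

open Real Set

lemma pos_of_hasDerivAt_pos {f f' : ℝ → ℝ} {a b : ℝ} (hab : a < b)
    (hf : ∀ y ∈ Icc a b, HasDerivAt f (f' y) y) (hf' : ∀ y ∈ Ioo a b, 0 < f' y) (ha : f a = 0) :
    0 < f b := by
  obtain ⟨c, hc, hslope⟩ := exists_hasDerivAt_eq_slope f f' hab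
    (fun y hy => (hf y hy).continuousAt.continuousWithinAt)
    (fun y hy => hf y (Ioo_subset_Icc_self hy))
  have := hf' c hc
  rw [hslope, ha, sub_zero] at this
  exact (div_pos_iff_of_pos_right (sub_pos.2 hab)).1 this

lemma cos_mul_sinh_lt_sin_mul_cosh {x : ℝ} (hx0 : 0 < x) (hx : x < π) :
    cos x * sinh x < sin x * cosh x := by
  refine sub_pos.1 <| pos_of_hasDerivAt_pos (f := fun t => sin t * cosh t - cos t * sinh t)
    (f' := fun t => 2 * sin t * sinh t) hx0 (fun y _ => ?_) (fun y hy => ?_) (by simp)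
  · exact (((hasDerivAt_sin y).mul (hasDerivAt_cosh y)).sub
      ((hasDerivAt_cos y).mul (hasDerivAt_sinh y))).congr_deriv (by ring)
  · have := sin_pos_of_pos_of_lt_pi hy.1 (hy.2.trans hx)
    have := sinh_pos_iff.2 hy.1
    positivity

lemma two_mul_mul_cos_mul_cosh_lt {x : ℝ} (hx0 : 0 < x) (hx : x < π) :
    2 * x * cos x * cosh x < sin x * cosh x + cos x * sinh x := by
  refine sub_pos.1 <| pos_of_hasDerivAt_pos
    (f := fun t => sin t * cosh t + cos t * sinh t - 2 * t * cos t * cosh t)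
    (f' := fun t => 2 * t * (sin t * cosh t - cos t * sinh t)) hx0 (fun y _ => ?_)
    (fun y hy => ?_) (by simp)
  · exact ((((hasDerivAt_sin y).mul (hasDerivAt_cosh y)).add
      ((hasDerivAt_cos y).mul (hasDerivAt_sinh y))).sub
      ((((hasDerivAt_id y).const_mul 2).mul (hasDerivAt_cos y)).mul
        (hasDerivAt_cosh y))).congr_deriv (by simp only [id_eq, Pi.mul_apply]; ring)
  · have := sub_pos.2 (cos_mul_sinh_lt_sin_mul_cosh hy.1 (hy.2.trans hx))
    have := hy.1
    positivity

lemma mul_sin_mul_cosh_add_cos_mul_sinh_lt {x : ℝ} (hx0 : 0 < x) (hx : x < π) :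
    x * (sin x * cosh x + cos x * sinh x) < 2 * sin x * sinh x := by
  refine sub_pos.1 <| pos_of_hasDerivAt_pos
    (f := fun t => 2 * sin t * sinh t - t * (sin t * cosh t + cos t * sinh t))
    (f' := fun t => sin t * cosh t + cos t * sinh t - 2 * t * cos t * cosh t) hx0
    (fun y _ => ?_) (fun y hy => sub_pos.2 (two_mul_mul_cos_mul_cosh_lt hy.1 (hy.2.trans hx)))
    (by simp)
  exact ((((hasDerivAt_sin y).const_mul 2).mul (hasDerivAt_sinh y)).sub
    ((hasDerivAt_id y).mul (((hasDerivAt_sin y).mul (hasDerivAt_cosh y)).add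
      ((hasDerivAt_cos y).mul (hasDerivAt_sinh y))))).congr_deriv
    (by simp only [id_eq, Pi.add_apply, Pi.mul_apply]; ring)

lemma cot_add_coth_lt {x : ℝ} (hx0 : 0 < x) (hx : x < π) :
    cos x / sin x + cosh x / sinh x < 2 / x := by
  have hs := sin_pos_of_pos_of_lt_pi hx0 hx
  have hsh := sinh_pos_iff.2 hx0
  rw [div_add_div _ _ hs.ne' hsh.ne', div_lt_div_iff₀ (by positivity) hx0]
  linarith [mul_sin_mul_cosh_add_cos_mul_sinh_lt hx0 hx]

lemma sq_lt_mul_of_inv_add_inv_lt {a b x : ℝ} (ha : 0 < a) (hb : 0 < b) (hx : 0 < x)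
    (h : a⁻¹ + b⁻¹ < 2 / x) : x ^ 2 < a * b := by
  have hsum : x * (a⁻¹ + b⁻¹) < 2 := by rwa [lt_div_iff₀ hx, mul_comm] at h
  have hinv : x ^ 2 * (a⁻¹ * b⁻¹) < 1 :=
    calc x ^ 2 * (a⁻¹ * b⁻¹) ≤ (x * (a⁻¹ + b⁻¹)) ^ 2 / 4 := by
          nlinarith [mul_nonneg (sq_nonneg x) (sq_nonneg (a⁻¹ - b⁻¹))]
      _ < 2 ^ 2 / 4 := by gcongr
      _ = 1 := by norm_num
  rwa [← mul_inv, ← div_eq_mul_inv, div_lt_one (by positivity)] at hinv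

lemma two_mul_lt_add_of_sq_lt_mul {a b x : ℝ} (hab : 0 ≤ a + b) (h : x ^ 2 < a * b) : 2 * x < a + b := by
  nlinarith [sq_nonneg (a - b), sq_nonneg (a + b - 2 * x)]

theorem stmt12 (x : ℝ) (hx : 0 < x) (hx2 : x < π/2) :
    Real.cos x/Real.sin x + Real.cosh x/Real.sinh x < 2/x ∧
    Real.tan x * Real.tanh x > x^2 ∧
    Real.tan x + Real.tanh x > 2*x := by
  have hcot := cot_add_coth_lt hx (hx2.trans (by linarith [pi_pos]))
  have ht : 0 < tan x := tan_pos_of_pos_of_lt_pi_div_two hx hx2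
  have hth : 0 < tanh x := by
    rw [tanh_eq_sinh_div_cosh]
    exact div_pos (sinh_pos_iff.2 hx) (cosh_pos x)
  have hprod : x ^ 2 < tan x * tanh x := by
    refine sq_lt_mul_of_inv_add_inv_lt ht hth hx ?_
    rwa [tan_eq_sin_div_cos, tanh_eq_sinh_div_cosh, inv_div, inv_div]
  exact ⟨hcot, hprod, two_mul_lt_add_of_sq_lt_mul (by positivity) hprod⟩
end
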